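/- Let W be a real m×n matrix and suppose r ∈ ℝ^n satisfies W r ≥ 0 componentwise. Then there exists c > 0 and z ∈ ℝ^m with z ≥ 0, W(c•r) + z ≥ 1, z ≥ 0 componentwise, and ∑ᵢ zᵢ = m - |{i : (W r)ᵢ > 0}|. In particular, the optimal value of the LP min ∑ zᵢ subject to (W r' + z ≥ 1, W r' ≥ 0, z ≥ 0) equals m - max_{r' : W r' ≥ 0} |{i : (W r')ᵢ > 0}|. -/

import Mathlib

/-!
Scaling a direction `r` with `W r ≥ 0` by a large enough `c > 0` pushes every strictly positive
entry of `W r` to at least `1`, so the slack is only needed, with value `1`, on the entries where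
`W r` vanishes. Conversely, any feasible slack `z` is at least `1` wherever `W r' ≤ 0`, so its
total is at least the number of non-positive entries of `W r'`.
-/

open Filter Finset

namespace SlackLP

variable {ι : Type*}

noncomputable def slack (y : ι → ℝ) : ι → ℝ := fun i => if 0 < y i then 0 else 1

lemma slack_nonneg (y : ι → ℝ) : 0 ≤ slack y := fun i => by
  unfold slack; split_ifs <;> norm_num

lemma sum_slack [Fintype ι] (y : ι → ℝ) :
    ∑ i, slack y i = (Fintype.card ι : ℝ) - (univ.filter fun i => 0 < y i).card := by
  have hcard := card_filter_add_card_filter_not (s := univ) fun i => 0 < y i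
  rw [card_univ] at hcard
  simp only [slack, sum_ite, sum_const_zero, sum_const, nsmul_eq_mul, mul_one, zero_add]
  rw [← hcard]
  push_cast
  ring

lemma exists_pos_one_le_mul_of_pos [Finite ι] (y : ι → ℝ) :
    ∃ c : ℝ, 0 < c ∧ ∀ i, 0 < y i → 1 ≤ c * y i := by
  have hlarge : ∀ i, ∀ᶠ c : ℝ in atTop, 0 < y i → 1 ≤ c * y i := fun i => by
    by_cases hi : 0 < y i
    · filter_upwards [eventually_ge_atTop (y i)⁻¹] with c hc _
      rwa [← inv_le_iff_one_le_mul₀ hi]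
    · exact Eventually.of_forall fun _ h => absurd h hi
  exact ((eventually_gt_atTop 0).and (eventually_all.2 hlarge)).exists

lemma one_le_smul_add_slack {y : ι → ℝ} (hy : 0 ≤ y) {c : ℝ}
    (hc : ∀ i, 0 < y i → 1 ≤ c * y i) (i : ι) : 1 ≤ (c • y) i + slack y i := by
  by_cases hi : 0 < y i
  · simpa [slack, hi] using hc i hi
  · simp [slack, le_antisymm (not_lt.1 hi) (hy i)]

lemma slack_le {y z : ι → ℝ} (hz : 0 ≤ z) (hyz : ∀ i, 1 ≤ y i + z i) :
    slack y ≤ z := fun i => by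
  by_cases hi : 0 < y i
  · simpa [slack, hi] using hz i
  · simp only [slack, hi, if_false]
    linarith [hyz i, not_lt.1 hi]

lemma card_sub_card_pos_le_sum [Fintype ι] {y z : ι → ℝ} (hz : 0 ≤ z)
    (hyz : ∀ i, 1 ≤ y i + z i) :
    (Fintype.card ι : ℝ) - (univ.filter fun i => 0 < y i).card ≤ ∑ i, z i := by
  rw [← sum_slack]
  exact sum_le_sum fun i _ => slack_le hz hyz i

variable {m n : ℕ}

lemma exists_scaled_feasible (W : Matrix (Fin m) (Fin n) ℝ) (r : Fin n → ℝ)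
    (hr : ∀ i, 0 ≤ W.mulVec r i) :
    ∃ c : ℝ, 0 < c ∧ ∃ z : Fin m → ℝ, (∀ i, 0 ≤ z i) ∧
      (∀ i, 1 ≤ W.mulVec (c • r) i + z i) ∧
      ∑ i, z i = (m : ℝ) - (univ.filter fun i => 0 < W.mulVec r i).card := by
  obtain ⟨c, hc, hlarge⟩ := exists_pos_one_le_mul_of_pos (W.mulVec r)
  refine ⟨c, hc, slack (W.mulVec r), slack_nonneg _, fun i => ?_, by simp [sum_slack]⟩
  rw [Matrix.mulVec_smul]
  exact one_le_smul_add_slack hr hlarge i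

end SlackLP

open SlackLP in
theorem slack_lp_value {m n : ℕ} (W : Matrix (Fin m) (Fin n) ℝ)
    (rstar : Fin n → ℝ) (hstar : ∀ i, 0 ≤ W.mulVec rstar i)
    (hmax : ∀ r' : Fin n → ℝ, (∀ i, 0 ≤ W.mulVec r' i) →
      (Finset.univ.filter fun i => 0 < W.mulVec r' i).card ≤
        (Finset.univ.filter fun i => 0 < W.mulVec rstar i).card) :
    (∀ r : Fin n → ℝ, (∀ i, 0 ≤ W.mulVec r i) →
      ∃ c : ℝ, 0 < c ∧ ∃ z : Fin m → ℝ, (∀ i, 0 ≤ z i) ∧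
        (∀ i, 1 ≤ W.mulVec (c • r) i + z i) ∧
        ∑ i, z i = (m : ℝ) - (Finset.univ.filter fun i => 0 < W.mulVec r i).card) ∧
    sInf {v : ℝ | ∃ (r' : Fin n → ℝ) (z : Fin m → ℝ),
        (∀ i, 1 ≤ W.mulVec r' i + z i) ∧ (∀ i, 0 ≤ W.mulVec r' i) ∧ (∀ i, 0 ≤ z i) ∧
        v = ∑ i, z i} =
      (m : ℝ) - (Finset.univ.filter fun i => 0 < W.mulVec rstar i).card := by
  refine ⟨exists_scaled_feasible W, IsLeast.csInf_eq ⟨?_, ?_⟩⟩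
  · obtain ⟨c, hc, z, hz, hfeas, hsum⟩ := exists_scaled_feasible W rstar hstar
    refine ⟨c • rstar, z, hfeas, fun i => ?_, hz, hsum.symm⟩
    rw [Matrix.mulVec_smul]
    exact smul_nonneg hc.le (hstar i)
  · rintro v ⟨r', z, hfeas, hr', hz, rfl⟩
    have hcount : ((univ.filter fun i => 0 < W.mulVec r' i).card : ℝ) ≤
        (univ.filter fun i => 0 < W.mulVec rstar i).card := by exact_mod_cast hmax r' hr'
    have hlower := card_sub_card_pos_le_sum (y := W.mulVec r') hz hfeas
    rw [Fintype.card_fin] at hlower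
    linarith
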